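/- arXiv:2305.15950 — 2 statements merged into one kernel-verified Lean document; each statement's English description precedes it below -/
import Mathlib

section
/- For every real n ≥ e, the function x ↦ x^(n-x) (for x in (0, n]) attains its maximum at some x* with x* ≤ n / ln(n / ln n), and the maximum value is at most (n / ln(n/ln n))^n. -/
/-!
Write `x^(n-x) = exp (g x)` with `g x = (n - x) log x`. Since `g' x = n / x - 1 - log x` is
decreasing, `g` is antitone beyond any point where `g'` is nonpositive, and at `L = n / B`,
`B = log (n / log n)`, one has `g' L = B - 1 - log n + log B ≤ -1` because `B ≤ log n`.
Moreover `g ≤ 0 = g 1` on `(0, 1]`, so a maximiser of `g` on the compact interval `[1, L]`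
maximises it on all of `(0, ∞)`; there `0 ≤ log x ≤ log L` gives `exp (g x) ≤ L ^ n`.
-/

open Real Set

lemma isMaxOn_Ioi_of_isMaxOn_Icc {g : ℝ → ℝ} {c a b x : ℝ} (hmax : IsMaxOn g (Icc a b) x)
    (hab : a ≤ b) (hleft : ∀ y ∈ Ioc c a, g y ≤ g a) (hright : AntitoneOn g (Ici b)) :
    IsMaxOn g (Ioi c) x := by
  intro y hy
  have hx_ge_a : g a ≤ g x := hmax ⟨le_rfl, hab⟩
  have hx_ge_b : g b ≤ g x := hmax ⟨hab, le_rfl⟩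
  show g y ≤ g x
  rcases le_or_gt y a with hya | hay
  · exact (hleft y ⟨hy, hya⟩).trans hx_ge_a
  rcases le_or_gt y b with hyb | hby
  · exact hmax ⟨hay.le, hyb⟩
  · exact (hright (mem_Ici.2 le_rfl) (mem_Ici.2 hby.le) hby.le).trans hx_ge_b

lemma continuousOn_sub_mul_log (n : ℝ) {s : Set ℝ} (hs : ∀ y ∈ s, y ≠ 0) :
    ContinuousOn (fun y => (n - y) * log y) s :=
  (continuousOn_const.sub continuousOn_id).mul (continuousOn_id.log hs)

lemma hasDerivAt_sub_mul_log (n : ℝ) {y : ℝ} (hy : y ≠ 0) :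
    HasDerivAt (fun y => (n - y) * log y) (n / y - 1 - log y) y := by
  refine (((hasDerivAt_id' y).const_sub n).mul (hasDerivAt_log hy)).congr_deriv ?_
  field_simp
  ring

lemma sub_mul_log_nonpos {n y : ℝ} (hn : 1 ≤ n) (hy : y ∈ Ioc 0 1) : (n - y) * log y ≤ 0 :=
  mul_nonpos_of_nonneg_of_nonpos (by linarith [hy.2]) (log_nonpos hy.1.le hy.2)

lemma antitoneOn_sub_mul_log {n L : ℝ} (hn : 0 ≤ n) (hL : 0 < L)
    (hslope : n / L - 1 - log L ≤ 0) : AntitoneOn (fun y => (n - y) * log y) (Ici L) := by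
  have hne : ∀ y ∈ Ici L, y ≠ 0 := fun y hy => (hL.trans_le hy).ne'
  refine antitoneOn_of_deriv_nonpos (convex_Ici L) (continuousOn_sub_mul_log n hne) ?_ ?_
  all_goals rw [interior_Ici]
  · exact fun y hy =>
      (hasDerivAt_sub_mul_log n (hne y (mem_Ioi.1 hy).le)).differentiableAt.differentiableWithinAt
  · intro y hy
    have hy0 : 0 < y := hL.trans hy
    rw [(hasDerivAt_sub_mul_log n hy0.ne').deriv]
    have : n / y ≤ n / L := div_le_div_of_nonneg_left hn hL hy.le
    linarith [log_le_log hL hy.le]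

lemma div_div_sub_one_sub_log_div_nonpos {n B : ℝ} (hn : 0 < n) (hB : 0 < B)
    (h : B + log B ≤ 1 + log n) : n / (n / B) - 1 - log (n / B) ≤ 0 := by
  rw [div_div_cancel₀ hn.ne', log_div hn.ne' hB.ne']
  linarith

lemma log_div_log_le_log {n : ℝ} (hn : exp 1 ≤ n) : log (n / log n) ≤ log n := by
  have h1 : 1 ≤ log n := by simpa using log_le_log (exp_pos 1) hn
  exact log_le_log (div_pos (by linarith [exp_pos 1]) (by linarith))
    (div_le_self (by linarith [exp_pos 1]) h1)

lemma log_div_log_add_log_log_div_log_le {n : ℝ} (hn : exp 1 ≤ n) (hB : 0 < log (n / log n)) :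
    log (n / log n) + log (log (n / log n)) ≤ log n := by
  have h1 : 1 ≤ log n := by simpa using log_le_log (exp_pos 1) hn
  have hlog : log (n / log n) = log n - log (log n) :=
    log_div (by linarith [exp_pos 1]) (by linarith)
  have := log_le_log hB (log_div_log_le_log hn)
  linarith

lemma exp_sub_mul_log_le_rpow {n x L : ℝ} (hn : 0 ≤ n) (hx : x ∈ Icc 1 L) :
    exp ((n - x) * log x) ≤ L ^ n := by
  have hx0 : 0 < x := one_pos.trans_le hx.1
  have hlogx : 0 ≤ log x := log_nonneg hx.1
  calc exp ((n - x) * log x) ≤ exp (log L * n) := by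
        refine exp_le_exp.2 ?_
        nlinarith [log_le_log hx0 hx.2, mul_nonneg hx0.le hlogx]
    _ = L ^ n := (rpow_def_of_pos (hx0.trans_le hx.2) n).symm

theorem stmt_4 (n : ℝ) (hn : Real.exp 1 ≤ n)
    (hn' : Real.exp 1 < n / Real.log n)
    (f : ℝ → ℝ) (hf : ∀ y : ℝ, f y = Real.exp ((n - y) * Real.log y)) :
    ∃ x : ℝ, x ∈ Set.Ioc (0 : ℝ) n ∧ IsMaxOn f (Set.Ioc (0 : ℝ) n) x ∧
      x ≤ n / Real.log (n / Real.log n) ∧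
      f x ≤ (n / Real.log (n / Real.log n)) ^ n := by
  obtain rfl : f = fun y => exp ((n - y) * log y) := funext hf
  have he : 1 < exp 1 := one_lt_exp_iff.2 one_pos
  have hn0 : 0 < n := by linarith
  set B := log (n / log n)
  have hB : 1 < B := by simpa using log_lt_log (exp_pos 1) hn'
  have hL1 : 1 ≤ n / B := calc
    1 ≤ n / log n := by linarith
    _ ≤ n / B := div_le_div_of_nonneg_left hn0.le (by linarith) (log_div_log_le_log hn)
  have hLn : n / B ≤ n := div_le_self hn0.le hB.le
  obtain ⟨x, hx, hmax⟩ := isCompact_Icc.exists_isMaxOn (nonempty_Icc.2 hL1)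
    (continuousOn_sub_mul_log n fun y hy => (one_pos.trans_le hy.1).ne')
  have hleft : ∀ y ∈ Ioc 0 1, (n - y) * log y ≤ (n - 1) * log 1 := by
    simpa using fun y => sub_mul_log_nonpos (by linarith)
  have hright : AntitoneOn (fun y => (n - y) * log y) (Ici (n / B)) :=
    antitoneOn_sub_mul_log hn0.le (by linarith) (div_div_sub_one_sub_log_div_nonpos hn0
      (by linarith) (by linarith [log_div_log_add_log_log_div_log_le hn (by linarith)]))
  have hglobal := isMaxOn_Ioi_of_isMaxOn_Icc hmax hL1 hleft hright
  exact ⟨x, ⟨by linarith [hx.1], hx.2.trans hLn⟩,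
    (hglobal.on_subset Ioc_subset_Ioi_self).comp_mono exp_monotone, hx.2,
    exp_sub_mul_log_le_rpow hn0.le hx⟩
end

section
/- Let T_x^+, T_x^-, T_y^+, T_y^- be the four linear orders obtained by sorting an n-point planar set (distinct coordinates) in increasing/decreasing x and y. Define k_{++} as the largest k ≤ n such that |Sub_j(T_x^+) \ Sub_j(T_y^+)| ≤ n/3 for all j ≤ k, and analogously k_{+-}, k_{-+}, k_{--}. Then at least one of k_{++}, k_{+-}, k_{-+}, k_{--} equals n. -/
/-! Let `P j`, `Q j` be the first `j` points in increasing `x` and increasing `y` order. If both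
`k_{++}` and `k_{+-}` are below `n`, some `j` has `|P j \ Q j| > n/3`, hence also `|Q j \ P j| > n/3`,
and since the first `j'` points in decreasing `y` order are the complement of `Q (n - j')`, some
`j'` has `|P j' ∩ Q (n - j')| > n/3` and `|(P j' ∪ Q (n - j'))ᶜ| > n/3`. Comparing `j` with `j'`
and with `n - j'`, three of these four sets are pairwise disjoint in each of the four cases,
which is impossible for sets of more than `n/3` points each. -/

/-- The set of the first `k` elements of the linear order on `Fin n`
represented by the listing `T : Fin n ≃ Fin n`. -/
def prefixSet {n : ℕ} (k : ℕ) (T : Fin n ≃ Fin n) : Finset (Fin n) :=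
  (Finset.univ.filter fun i : Fin n => (i : ℕ) < k).image T

/-- The largest `k ≤ n` such that `|prefixSet j T \ prefixSet j U| ≤ n / 3`
for every `j ≤ k`. -/
def kval {n : ℕ} (T U : Fin n ≃ Fin n) : ℕ :=
  Nat.findGreatest (fun k => ∀ j ≤ k, (prefixSet j T \ prefixSet j U).card ≤ n / 3) n

open Finset

theorem false_of_disjoint_of_div_three_lt_card {α : Type*} [Fintype α] [DecidableEq α] {m : ℕ}
    (hm : Fintype.card α ≤ m) {X Y Z : Finset α}
    (hXY : Disjoint X Y) (hXZ : Disjoint X Z) (hYZ : Disjoint Y Z)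
    (hX : m / 3 < #X) (hY : m / 3 < #Y) (hZ : m / 3 < #Z) : False := by
  have h := (card_le_univ (X ∪ Y ∪ Z)).trans hm
  rw [card_union_of_disjoint (disjoint_union_left.2 ⟨hXZ, hYZ⟩), card_union_of_disjoint hXY] at h
  omega

theorem false_of_monotone_of_div_three_lt_card {α : Type*} [Fintype α] [DecidableEq α]
    {m : ℕ} (hm : Fintype.card α ≤ m) {P Q : ℕ → Finset α} (hP : Monotone P) (hQ : Monotone Q)
    {j a b : ℕ} (hB : m / 3 < #(P j \ Q j)) (hC : m / 3 < #(Q j \ P j))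
    (hA : m / 3 < #(P a ∩ Q b)) (hD : m / 3 < #(P a ∪ Q b)ᶜ) :
    False := by
  have hBC : Disjoint (P j \ Q j) (Q j \ P j) := disjoint_sdiff_sdiff
  have hAD : Disjoint (P a ∩ Q b) (P a ∪ Q b)ᶜ :=
    disjoint_compl_right.mono_left (inter_subset_left.trans subset_union_left)
  rcases le_or_gt a j with haj | hja <;> rcases le_or_gt b j with hbj | hjb
  · have hAB : Disjoint (P a ∩ Q b) (P j \ Q j) :=
      disjoint_sdiff.mono_left (inter_subset_right.trans (hQ hbj))
    have hAC : Disjoint (P a ∩ Q b) (Q j \ P j) :=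
      disjoint_sdiff.mono_left (inter_subset_left.trans (hP haj))
    exact false_of_disjoint_of_div_three_lt_card hm hAB hAC hBC hA hB hC
  · have hAC : Disjoint (P a ∩ Q b) (Q j \ P j) :=
      disjoint_sdiff.mono_left (inter_subset_left.trans (hP haj))
    have hCD : Disjoint (Q j \ P j) (P a ∪ Q b)ᶜ :=
      disjoint_compl_right.mono_left (sdiff_subset.trans ((hQ hjb.le).trans subset_union_right))
    exact false_of_disjoint_of_div_three_lt_card hm hAC hAD hCD hA hC hD
  · have hAB : Disjoint (P a ∩ Q b) (P j \ Q j) :=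
      disjoint_sdiff.mono_left (inter_subset_right.trans (hQ hbj))
    have hBD : Disjoint (P j \ Q j) (P a ∪ Q b)ᶜ :=
      disjoint_compl_right.mono_left (sdiff_subset.trans ((hP hja.le).trans subset_union_left))
    exact false_of_disjoint_of_div_three_lt_card hm hAB hAD hBD hA hB hD
  · have hBD : Disjoint (P j \ Q j) (P a ∪ Q b)ᶜ :=
      disjoint_compl_right.mono_left (sdiff_subset.trans ((hP hja.le).trans subset_union_left))
    have hCD : Disjoint (Q j \ P j) (P a ∪ Q b)ᶜ :=
      disjoint_compl_right.mono_left (sdiff_subset.trans ((hQ hjb.le).trans subset_union_right))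
    exact false_of_disjoint_of_div_three_lt_card hm hBC hBD hCD hB hC hD

section PrefixSet

variable {n : ℕ}

theorem mem_prefixSet {k : ℕ} {T : Fin n ≃ Fin n} {i : Fin n} :
    i ∈ prefixSet k T ↔ (T.symm i : ℕ) < k := by
  simp only [prefixSet, mem_image, mem_filter, mem_univ, true_and]
  constructor
  · rintro ⟨a, ha, rfl⟩
    simpa using ha
  · exact fun h => ⟨T.symm i, h, T.apply_symm_apply i⟩

theorem monotone_prefixSet (T : Fin n ≃ Fin n) : Monotone (prefixSet · T) :=
  fun _ _ h _ hi => mem_prefixSet.2 ((mem_prefixSet.1 hi).trans_le h)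

theorem card_prefixSet {k : ℕ} (hk : k ≤ n) (T : Fin n ≃ Fin n) : #(prefixSet k T) = k := by
  have : univ.filter (fun i : Fin n => (i : ℕ) < k) =
      (range k).attachFin fun _ hm => (mem_range.1 hm).trans_le hk := by
    ext i
    simp [mem_attachFin]
  rw [prefixSet, card_image_of_injective _ T.injective, this, card_attachFin, card_range]

theorem prefixSet_revPerm_trans {j : ℕ} (hj : j ≤ n) (T : Fin n ≃ Fin n) :
    prefixSet j (Fin.revPerm.trans T) = (prefixSet (n - j) T)ᶜ := by
  ext i
  have hi := (T.symm i).isLt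
  simp only [mem_prefixSet, mem_compl, Equiv.symm_trans_apply, Fin.revPerm_symm,
    Fin.revPerm_apply, Fin.val_rev]
  omega

theorem exists_div_three_lt_card_of_kval_ne {T U : Fin n ≃ Fin n} (h : kval T U ≠ n) :
    ∃ j ≤ n, n / 3 < #(prefixSet j T \ prefixSet j U) := by
  by_contra! hle
  exact h (le_antisymm (Nat.findGreatest_le n) (Nat.le_findGreatest le_rfl hle))

theorem eq_revPerm_trans_of_strictMono_of_strictAnti {β : Type*} [LinearOrder β]
    {f : Fin n → β} {T U : Fin n ≃ Fin n} (hT : StrictMono (f ∘ T)) (hU : StrictAnti (f ∘ U)) :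
    U = Fin.revPerm.trans T := by
  have hf : Function.Injective f := by
    simpa [Function.comp_assoc] using hT.injective.comp T.symm.injective
  have hrev : StrictAnti (f ∘ (Fin.revPerm.trans T)) :=
    fun _ _ hij => hT (Fin.rev_lt_rev.2 hij)
  have hrange : Set.range (f ∘ U) = Set.range (f ∘ (Fin.revPerm.trans T)) := by
    rw [Set.range_comp, Set.range_comp, Equiv.range_eq_univ, Equiv.range_eq_univ]
  exact Equiv.ext fun i => hf (congrFun ((hU.range_inj hrev).1 hrange) i)

end PrefixSet

theorem stmt_9_general (n : ℕ) (V : Fin n → ℝ × ℝ)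
    (Txp Txm Typ Tym : Fin n ≃ Fin n)
    (hTyp : ∀ i j : Fin n, i < j → (V (Typ i)).2 < (V (Typ j)).2)
    (hTym : ∀ i j : Fin n, i < j → (V (Tym j)).2 < (V (Tym i)).2) :
    kval Txp Typ = n ∨ kval Txp Tym = n ∨ kval Txm Typ = n ∨ kval Txm Tym = n := by
  by_contra! h
  obtain ⟨j, hj, hB⟩ := exists_div_three_lt_card_of_kval_ne h.1
  obtain ⟨j', hj', hA⟩ := exists_div_three_lt_card_of_kval_ne h.2.1
  have hC := card_sdiff_comm ((card_prefixSet hj Txp).trans (card_prefixSet hj Typ).symm) ▸ hB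
  have hD := card_sdiff_comm ((card_prefixSet hj' Txp).trans (card_prefixSet hj' Tym).symm) ▸ hA
  rw [eq_revPerm_trans_of_strictMono_of_strictAnti (f := fun i => (V i).2) hTyp hTym,
    prefixSet_revPerm_trans hj'] at hA hD
  rw [sdiff_compl] at hA
  rw [sdiff_eq, ← compl_sup, sup_comm] at hD
  exact false_of_monotone_of_div_three_lt_card (Fintype.card_fin n).le (monotone_prefixSet Txp)
    (monotone_prefixSet Typ) hB hC hA hD

theorem stmt_9 (n : ℕ) (hn3 : 3 ∣ n) (V : Fin n → ℝ × ℝ)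
    (hx : ∀ i j : Fin n, i ≠ j → (V i).1 ≠ (V j).1)
    (hy : ∀ i j : Fin n, i ≠ j → (V i).2 ≠ (V j).2)
    (Txp Txm Typ Tym : Fin n ≃ Fin n)
    (hTxp : ∀ i j : Fin n, i < j → (V (Txp i)).1 < (V (Txp j)).1)
    (hTxm : ∀ i j : Fin n, i < j → (V (Txm j)).1 < (V (Txm i)).1)
    (hTyp : ∀ i j : Fin n, i < j → (V (Typ i)).2 < (V (Typ j)).2)
    (hTym : ∀ i j : Fin n, i < j → (V (Tym j)).2 < (V (Tym i)).2) :
    kval Txp Typ = n ∨ kval Txp Tym = n ∨ kval Txm Typ = n ∨ kval Txm Tym = n :=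
  stmt_9_general n V Txp Txm Typ Tym hTyp hTym
end
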